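/- arXiv:1710.10539 — 5 statements merged into one kernel-verified Lean document; each statement's English description precedes it below -/
import Mathlib

section
/- Let N ≥ 1 and let A be an N×N real symmetric matrix with nonnegative entries, and let λ > 0 and α > 0. Suppose ρ ∈ ℝ^N is a nonzero vector with 0 ≤ ρ_i ≤ 1 for all i satisfying the endemic steady-state equations ρ_i = λα(Aρ)_i / (1 + λα(Aρ)_i) for every i. Then λ·α·μ_max(A) ≥ 1, where μ_max(A) is the largest eigenvalue of A; consequently λ·α·ρ(A) ≥ 1, where ρ(A) = max over eigenvalues μ of A of |μ| is the spectral radius of A. In other words, if an epidemic becomes endemic then necessarily λ ≥ 1/(α ρ(A)). -/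
open Matrix Finset
open scoped InnerProductSpace

/-!
At an endemic steady state `ρ` we have `ρᵢ = tᵢ / (1 + tᵢ) ≤ tᵢ` with `tᵢ = λα (Aρ)ᵢ ≥ 0`, so `ρ`
is a nonnegative nonzero vector with `ρ ≤ λα Aρ`. Pairing with `ρ` and bounding the Rayleigh
quotient of the symmetric matrix `A` by its largest eigenvalue `μ_max` gives
`‖ρ‖² ≤ λα ⟪ρ, Aρ⟫ ≤ λα μ_max ‖ρ‖²`, hence `1 ≤ λα μ_max ≤ λα ρ(A)`.
-/

namespace Matrix.IsHermitian

variable {𝕜 n : Type*} [RCLike 𝕜] [Fintype n] [DecidableEq n] {A : Matrix n n 𝕜}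

theorem inner_eigenvectorBasis_mulVec (hA : A.IsHermitian) (x : n → 𝕜) (i : n) :
    ⟪hA.eigenvectorBasis i, WithLp.toLp 2 (A *ᵥ x)⟫_𝕜 =
      hA.eigenvalues i * ⟪hA.eigenvectorBasis i, WithLp.toLp 2 x⟫_𝕜 := by
  have hleft : star ⇑(hA.eigenvectorBasis i) ᵥ* A = star (A *ᵥ ⇑(hA.eigenvectorBasis i)) := by
    rw [star_mulVec, hA.eq]
  simp only [EuclideanSpace.inner_eq_star_dotProduct]
  rw [dotProduct_comm, dotProduct_mulVec, hleft, mulVec_eigenvectorBasis, star_smul,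
    smul_dotProduct, dotProduct_comm]
  simp [RCLike.real_smul_eq_coe_mul]

theorem re_star_dotProduct_mulVec_le (hA : A.IsHermitian) (hn : (univ : Finset n).Nonempty)
    (x : n → 𝕜) :
    RCLike.re (star x ⬝ᵥ (A *ᵥ x)) ≤ univ.sup' hn hA.eigenvalues * RCLike.re (star x ⬝ᵥ x) := by
  have hquad : star x ⬝ᵥ (A *ᵥ x) =
      ∑ i, (hA.eigenvalues i : 𝕜) * ‖⟪hA.eigenvectorBasis i, WithLp.toLp 2 x⟫_𝕜‖ ^ 2 := by
    rw [dotProduct_comm, ← EuclideanSpace.inner_eq_star_dotProduct,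
      ← hA.eigenvectorBasis.sum_inner_mul_inner]
    refine sum_congr rfl fun i _ => ?_
    rw [inner_eigenvectorBasis_mulVec, ← inner_conj_symm, mul_left_comm, RCLike.conj_mul]
  have hnorm : RCLike.re (star x ⬝ᵥ x) =
      ∑ i, ‖⟪hA.eigenvectorBasis i, WithLp.toLp 2 x⟫_𝕜‖ ^ 2 := by
    rw [hA.eigenvectorBasis.sum_sq_norm_inner_right, dotProduct_comm,
      ← EuclideanSpace.inner_eq_star_dotProduct, inner_self_eq_norm_sq]
  rw [hquad, hnorm, mul_sum, map_sum]
  refine sum_le_sum fun i _ => ?_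
  rw [← RCLike.ofReal_pow, ← RCLike.ofReal_mul, RCLike.ofReal_re]
  exact mul_le_mul_of_nonneg_right (le_sup' _ (mem_univ i)) (by positivity)

theorem one_le_mul_sup'_eigenvalues_of_le_smul_mulVec {A : Matrix n n ℝ} (hA : A.IsHermitian)
    (hn : (univ : Finset n).Nonempty) {c : ℝ} (hc : 0 ≤ c) {x : n → ℝ} (hx₀ : 0 ≤ x)
    (hx : x ≠ 0) (hsub : x ≤ c • (A *ᵥ x)) :
    1 ≤ c * univ.sup' hn hA.eigenvalues := by
  have hrayleigh : x ⬝ᵥ (A *ᵥ x) ≤ univ.sup' hn hA.eigenvalues * (x ⬝ᵥ x) := by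
    simpa only [star_trivial, RCLike.re_to_real] using hA.re_star_dotProduct_mulVec_le hn x
  have hpos : 0 < x ⬝ᵥ x :=
    (dotProduct_nonneg_of_nonneg hx₀ hx₀).lt_of_ne' (dotProduct_self_eq_zero.not.mpr hx)
  have hle : x ⬝ᵥ x ≤ c * univ.sup' hn hA.eigenvalues * (x ⬝ᵥ x) :=
    calc x ⬝ᵥ x ≤ x ⬝ᵥ (c • (A *ᵥ x)) := dotProduct_le_dotProduct_of_nonneg_left hsub hx₀
      _ = c * (x ⬝ᵥ (A *ᵥ x)) := dotProduct_smul c x _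
      _ ≤ c * (univ.sup' hn hA.eigenvalues * (x ⬝ᵥ x)) := mul_le_mul_of_nonneg_left hrayleigh hc
      _ = c * univ.sup' hn hA.eigenvalues * (x ⬝ᵥ x) := (mul_assoc _ _ _).symm
  exact le_of_mul_le_mul_right (by rwa [one_mul]) hpos

theorem sup'_eigenvalues_le_sup'_abs (hA : A.IsHermitian) (hn : (univ : Finset n).Nonempty) :
    univ.sup' hn hA.eigenvalues ≤ univ.sup' hn fun i => |hA.eigenvalues i| :=
  sup'_mono_fun fun _ _ => le_abs_self _

end Matrix.IsHermitian

/-- Core of Theorem 1: if a nonzero endemic steady state exists for the SIS comparison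
system, then `λ·α·μ_max(A) ≥ 1`, hence `λ·α·ρ(A) ≥ 1`. -/
theorem endemic_implies_threshold
    (N : ℕ) (hN : 1 ≤ N) (A : Matrix (Fin N) (Fin N) ℝ)
    (hA : A.IsHermitian) (hApos : ∀ i j, 0 ≤ A i j)
    (lam alp : ℝ) (hlam : 0 < lam) (halp : 0 < alp)
    (ρ : Fin N → ℝ) (hρne : ρ ≠ 0) (hρ : ∀ i, 0 ≤ ρ i ∧ ρ i ≤ 1)
    (heq : ∀ i, ρ i = lam * alp * A.mulVec ρ i / (1 + lam * alp * A.mulVec ρ i)) :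
    1 ≤ lam * alp *
      Finset.univ.sup' (Finset.univ_nonempty_iff.mpr ⟨⟨0, hN⟩⟩) hA.eigenvalues ∧
    1 ≤ lam * alp *
      Finset.univ.sup' (Finset.univ_nonempty_iff.mpr ⟨⟨0, hN⟩⟩)
        (fun i => |hA.eigenvalues i|) := by
  have hc : 0 ≤ lam * alp := (mul_pos hlam halp).le
  have hρ₀ : 0 ≤ ρ := fun i => (hρ i).1
  have hsub : ρ ≤ (lam * alp) • (A *ᵥ ρ) := fun i => by
    have ht : 0 ≤ lam * alp * (A *ᵥ ρ) i :=
      mul_nonneg hc (dotProduct_nonneg_of_nonneg (fun j => hApos i j) hρ₀)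
    exact (heq i).trans_le (div_le_self ht (le_add_of_nonneg_right ht))
  have hn : (univ : Finset (Fin N)).Nonempty := univ_nonempty_iff.mpr ⟨⟨0, hN⟩⟩
  have hmax := hA.one_le_mul_sup'_eigenvalues_of_le_smul_mulVec hn hc hρ₀ hρne hsub
  exact ⟨hmax, hmax.trans (mul_le_mul_of_nonneg_left (hA.sup'_eigenvalues_le_sup'_abs hn) hc)⟩
end

section
/- Let N ≥ 1, let A be an N×N real symmetric matrix with nonnegative entries and largest eigenvalue μ_max(A), and let λ > 0 satisfy λ·μ_max(A) ≤ 1. Suppose ρ ∈ ℝ^N with 0 ≤ ρ_i ≤ 1 for all i satisfies the equilibrium equations ρ_i = λ·φ_i·(1−ρ_i)·(Aρ)_i for all i, for some φ ∈ ℝ^N with 0 < φ_i ≤ 1. Then ρ = 0. That is, when λ ≤ 1/μ_max(A), the disease-free state ρ₀ = 0 is the unique equilibrium of the SIS system in the cube H = [0,1]^N. -/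
/-!
Put `x = λ A ρ ≥ 0`. Since `φ_i ≤ 1`, the equilibrium equation gives `ρ_i ≤ (1 - ρ_i) x_i`, so
`ρ ≤ x` with strict inequality wherever `ρ_i > 0`. Hence a nonzero equilibrium would satisfy
`ρ ⬝ ρ < ρ ⬝ x = λ ρᵀAρ ≤ λ μ_max ρ ⬝ ρ ≤ ρ ⬝ ρ`, the middle step being the Rayleigh bound
`A ≤ μ_max • 1` in the Loewner order.
-/

open Matrix Finset

open scoped MatrixOrder ComplexOrder in
theorem Matrix.IsHermitian.dotProduct_mulVec_le {𝕜 n : Type*} [RCLike 𝕜] [Fintype n]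
    [DecidableEq n] {A : Matrix n n 𝕜} (hA : A.IsHermitian) {μ : ℝ}
    (hμ : ∀ i, hA.eigenvalues i ≤ μ) (x : n → 𝕜) :
    star x ⬝ᵥ A *ᵥ x ≤ (μ : 𝕜) * (star x ⬝ᵥ x) := by
  have hle : A ≤ algebraMap ℝ (Matrix n n 𝕜) μ := by
    refine le_algebraMap_of_spectrum_le (fun r hr => ?_) hA
    obtain ⟨i, rfl⟩ := hA.spectrum_real_eq_range_eigenvalues ▸ hr
    exact hμ i
  have hpsd := (le_iff.mp hle).dotProduct_mulVec_nonneg x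
  rwa [sub_mulVec, dotProduct_sub, sub_nonneg, Algebra.algebraMap_eq_smul_one, smul_mulVec,
    one_mulVec, dotProduct_smul, RCLike.real_smul_eq_coe_mul] at hpsd

theorem eq_zero_of_le_one_sub_mul {n : Type*} [Fintype n] {ρ x : n → ℝ} (hρ : 0 ≤ ρ) (hx : 0 ≤ x)
    (hle : ∀ i, ρ i ≤ (1 - ρ i) * x i) (hdot : ρ ⬝ᵥ x ≤ ρ ⬝ᵥ ρ) : ρ = 0 := by
  by_contra hne
  obtain ⟨k, hk⟩ : ∃ k, 0 < ρ k := by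
    by_contra! h
    exact hne (funext fun i => le_antisymm (h i) (hρ i))
  have hρx : ∀ i, ρ i ≤ x i := fun i => by linarith [hle i, mul_nonneg (hρ i) (hx i)]
  have hxk : 0 < x k := (hx k).lt_of_ne fun h => by
    have hk' := hle k
    rw [← h, Pi.zero_apply, mul_zero] at hk'
    linarith
  have hlt : ρ ⬝ᵥ ρ < ρ ⬝ᵥ x :=
    sum_lt_sum (fun i _ => mul_le_mul_of_nonneg_left (hρx i) (hρ i))
      ⟨k, mem_univ k, mul_lt_mul_of_pos_left (by linarith [hle k, mul_pos hk hxk]) hk⟩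
  exact hdot.not_gt hlt

/-- Uniqueness of the disease-free equilibrium (Theorem 2): if `λ μ_max(A) ≤ 1`, then the
only equilibrium of the SIS system in the cube `[0,1]^N` is `ρ = 0`. -/
theorem diseaseFree_unique_equilibrium
    (N : ℕ) (hN : 1 ≤ N) (A : Matrix (Fin N) (Fin N) ℝ)
    (hA : A.IsHermitian) (hApos : ∀ i j, 0 ≤ A i j)
    (lam : ℝ) (hlam : 0 < lam)
    (hthr : lam * Finset.univ.sup' (Finset.univ_nonempty_iff.mpr ⟨⟨0, hN⟩⟩) hA.eigenvalues ≤ 1)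
    (ρ φ : Fin N → ℝ) (hρ : ∀ i, 0 ≤ ρ i ∧ ρ i ≤ 1) (hφ : ∀ i, 0 < φ i ∧ φ i ≤ 1)
    (heq : ∀ i, ρ i = lam * φ i * (1 - ρ i) * A.mulVec ρ i) :
    ρ = 0 := by
  set μ := Finset.univ.sup' (Finset.univ_nonempty_iff.mpr ⟨⟨0, hN⟩⟩) hA.eigenvalues
  set x := lam • A *ᵥ ρ
  have hρ0 : 0 ≤ ρ := fun i => (hρ i).1
  have hx : 0 ≤ x := smul_nonneg hlam.le fun i => dotProduct_nonneg_of_nonneg (hApos i) hρ0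
  refine eq_zero_of_le_one_sub_mul hρ0 hx (fun i => ?_) ?_
  · calc ρ i = φ i * ((1 - ρ i) * x i) := by
          simp only [x, Pi.smul_apply, smul_eq_mul]; nth_rewrite 1 [heq i]; ring
      _ ≤ (1 - ρ i) * x i :=
          mul_le_of_le_one_left (mul_nonneg (by linarith [(hρ i).2]) (hx i)) (hφ i).2
  · have hray : ρ ⬝ᵥ A *ᵥ ρ ≤ μ * (ρ ⬝ᵥ ρ) := by
      simpa using hA.dotProduct_mulVec_le (fun i => le_sup' hA.eigenvalues (mem_univ i)) ρ
    calc ρ ⬝ᵥ x = lam * (ρ ⬝ᵥ A *ᵥ ρ) := dotProduct_smul lam ρ _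
      _ ≤ lam * μ * (ρ ⬝ᵥ ρ) := by rw [mul_assoc]; exact mul_le_mul_of_nonneg_left hray hlam.le
      _ ≤ ρ ⬝ᵥ ρ := mul_le_of_le_one_left (dotProduct_self_star_nonneg ρ) hthr
end

section
/- Let N ≥ 1, let A be an N×N real symmetric matrix with nonnegative entries and largest eigenvalue μ_max(A), let λ > 0 with λ·μ_max(A) < 1, and let φ_i : ℝ → ℝ (i = 1,…,N) be functions with 0 < φ_i(t) ≤ 1 for all t. Suppose ρ : ℝ → ℝ^N is differentiable, satisfies 0 ≤ ρ_i(t) ≤ 1 for all i and all t ≥ 0, and solves ρ̇_i(t) = −ρ_i(t) + λφ_i(t)(1−ρ_i(t))·Σ_j a_ij ρ_j(t) for all i and t ≥ 0. Then for all t ≥ 0, Σ_i ρ_i(t)² ≤ e^{−2(1−λ·μ_max(A))·t}·Σ_i ρ_i(0)²; in particular ρ(t) → 0 as t → ∞, so the disease-free equilibrium is globally asymptotically stable. -/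
/-!
Along a trajectory with `ρ ≥ 0` the factor `λ φ_i (1 - ρ_i)` is at most `λ` and
`ρ_i (Aρ)_i ≥ 0`, so the infection term is dominated by its linearization `λ A ρ`.
Hence `V = ρ ⬝ᵥ ρ` satisfies `V' ≤ -2V + 2λ ρ ⬝ᵥ Aρ ≤ -2(1 - λ μ_max) V` by the
Rayleigh bound `ρ ⬝ᵥ Aρ ≤ μ_max ρ ⬝ᵥ ρ`, and Grönwall's inequality gives the
exponential decay.
-/

open Matrix Finset

theorem le_exp_mul_of_hasDerivAt_le_mul {f f' : ℝ → ℝ} {K a : ℝ}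
    (hf : ∀ s ∈ Set.Ici a, HasDerivAt f (f' s) s) (bound : ∀ s ∈ Set.Ici a, f' s ≤ K * f s)
    {t : ℝ} (ht : a ≤ t) : f t ≤ f a * Real.exp (K * (t - a)) := by
  have hcont : ContinuousOn f (Set.Icc a t) := fun s hs ↦
    (hf s hs.1).continuousAt.continuousWithinAt
  have := le_gronwallBound_of_liminf_deriv_right_le (K := K) (ε := 0) hcont
    (fun s hs _ hr ↦ (hf s hs.1).hasDerivWithinAt.liminf_right_slope_le hr) le_rfl
    (fun s hs ↦ (add_zero (K * f s)).symm ▸ bound s hs.1)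
    t ⟨ht, le_rfl⟩
  rwa [gronwallBound_ε0] at this

section

variable {n : Type*} [Fintype n]

open scoped MatrixOrder in
theorem Matrix.IsHermitian.dotProduct_mulVec_le_mul_dotProduct [DecidableEq n]
    {A : Matrix n n ℝ} (hA : A.IsHermitian) {r : ℝ} (hr : ∀ i, hA.eigenvalues i ≤ r)
    (x : n → ℝ) : x ⬝ᵥ (A *ᵥ x) ≤ r * (x ⬝ᵥ x) := by
  have hle : A ≤ algebraMap ℝ (Matrix n n ℝ) r := by
    rw [le_algebraMap_iff_spectrum_le hA.isSelfAdjoint, hA.spectrum_real_eq_range_eigenvalues]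
    rintro _ ⟨i, rfl⟩
    exact hr i
  have := (Matrix.le_iff.mp hle).dotProduct_mulVec_nonneg x
  simpa [sub_mulVec, dotProduct_sub, algebraMap_eq_diagonal, Pi.algebraMap_def,
    smul_dotProduct] using this

def sisField (A : Matrix n n ℝ) (lam : ℝ) (φ x : n → ℝ) (i : n) : ℝ :=
  -x i + lam * φ i * (1 - x i) * (A *ᵥ x) i

theorem dotProduct_sisField_le [DecidableEq n] {A : Matrix n n ℝ} (hA : A.IsHermitian)
    (hApos : ∀ i j, 0 ≤ A i j) {lam μ : ℝ} (hlam : 0 ≤ lam) (hμ : ∀ i, hA.eigenvalues i ≤ μ)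
    {φ x : n → ℝ} (hφ : ∀ i, 0 ≤ φ i ∧ φ i ≤ 1) (hx : ∀ i, 0 ≤ x i) :
    x ⬝ᵥ sisField A lam φ x ≤ -(1 - lam * μ) * (x ⬝ᵥ x) := by
  have hnode : ∀ i,
      x i * sisField A lam φ x i ≤ -(x i * x i) + lam * (x i * (A *ᵥ x) i) := by
    intro i
    have hAx : 0 ≤ (A *ᵥ x) i := sum_nonneg fun j _ ↦ mul_nonneg (hApos i j) (hx j)
    have hfactor : lam * φ i * (1 - x i) ≤ lam := by
      have hφx : φ i * (1 - x i) ≤ 1 :=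
        (mul_le_of_le_one_right (hφ i).1 (by linarith [hx i])).trans (hφ i).2
      simpa [mul_assoc] using mul_le_mul_of_nonneg_left hφx hlam
    unfold sisField
    linear_combination mul_le_mul_of_nonneg_right hfactor (mul_nonneg (hx i) hAx)
  have hray := hA.dotProduct_mulVec_le_mul_dotProduct hμ x
  calc x ⬝ᵥ sisField A lam φ x ≤ -(x ⬝ᵥ x) + lam * (x ⬝ᵥ (A *ᵥ x)) := by
        simp only [dotProduct, mul_sum, ← sum_neg_distrib, ← sum_add_distrib]
        exact sum_le_sum fun i _ ↦ hnode i
    _ ≤ -(x ⬝ᵥ x) + lam * (μ * (x ⬝ᵥ x)) := by gcongr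
    _ = -(1 - lam * μ) * (x ⬝ᵥ x) := by ring

theorem hasDerivAt_dotProduct_self {ρ : ℝ → n → ℝ} {ρ' : n → ℝ} {t : ℝ}
    (hρ : ∀ i, HasDerivAt (fun s ↦ ρ s i) (ρ' i) t) :
    HasDerivAt (fun s ↦ ρ s ⬝ᵥ ρ s) (2 * (ρ t ⬝ᵥ ρ')) t := by
  simp only [dotProduct, mul_sum]
  exact HasDerivAt.fun_sum fun i _ ↦ ((hρ i).fun_mul (hρ i)).congr_deriv (by ring)

end

theorem diseaseFree_exponential_stability_general
    (N : ℕ) (hN : 1 ≤ N) (A : Matrix (Fin N) (Fin N) ℝ)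
    (hA : A.IsHermitian) (hApos : ∀ i j, 0 ≤ A i j)
    (lam : ℝ) (hlam : 0 < lam)
    (φ : Fin N → ℝ → ℝ) (hφ : ∀ i t, 0 < φ i t ∧ φ i t ≤ 1)
    (ρ : ℝ → Fin N → ℝ) (hdiff : ∀ i, Differentiable ℝ (fun t => ρ t i))
    (hrange : ∀ i t, 0 ≤ t → 0 ≤ ρ t i ∧ ρ t i ≤ 1)
    (hode : ∀ i t, 0 ≤ t →
      deriv (fun s => ρ s i) t =
        -ρ t i + lam * φ i t * (1 - ρ t i) * ∑ j, A i j * ρ t j) :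
    ∀ t : ℝ, 0 ≤ t →
      ∑ i, ρ t i ^ 2 ≤
        Real.exp (-2 * (1 - lam *
            Finset.univ.sup' (Finset.univ_nonempty_iff.mpr ⟨⟨0, hN⟩⟩) hA.eigenvalues) * t) *
          ∑ i, ρ 0 i ^ 2 := by
  intro t ht
  set μ := Finset.univ.sup' (Finset.univ_nonempty_iff.mpr ⟨⟨0, hN⟩⟩) hA.eigenvalues
  have hderiv : ∀ s ∈ Set.Ici (0 : ℝ), HasDerivAt (fun s ↦ ρ s ⬝ᵥ ρ s)
      (2 * (ρ s ⬝ᵥ sisField A lam (φ · s) (ρ s))) s := fun s hs ↦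
    hasDerivAt_dotProduct_self fun i ↦ (hdiff i s).hasDerivAt.congr_deriv (hode i s hs)
  have hbound : ∀ s ∈ Set.Ici (0 : ℝ),
      2 * (ρ s ⬝ᵥ sisField A lam (φ · s) (ρ s)) ≤ -2 * (1 - lam * μ) * (ρ s ⬝ᵥ ρ s) := by
    intro s hs
    have := dotProduct_sisField_le (μ := μ) hA hApos hlam.le
      (fun i ↦ le_sup' hA.eigenvalues (mem_univ i)) (fun i ↦ ⟨(hφ i s).1.le, (hφ i s).2⟩)
      (fun i ↦ (hrange i s hs).1)
    linarith
  have := le_exp_mul_of_hasDerivAt_le_mul hderiv hbound ht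
  simpa only [dotProduct, sq, sub_zero, mul_comm _ (Real.exp _)] using this

/-- Theorem 2 (global asymptotic stability, quantitative form): if `λ μ_max(A) < 1`, then
along any solution of the SIS system with awareness factors in `(0,1]` one has
`Σ_i ρ_i(t)² ≤ e^{−2(1−λ μ_max(A)) t} Σ_i ρ_i(0)²` for all `t ≥ 0`. -/
theorem diseaseFree_exponential_stability
    (N : ℕ) (hN : 1 ≤ N) (A : Matrix (Fin N) (Fin N) ℝ)
    (hA : A.IsHermitian) (hApos : ∀ i j, 0 ≤ A i j)
    (lam : ℝ) (hlam : 0 < lam)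
    (hthr : lam * Finset.univ.sup' (Finset.univ_nonempty_iff.mpr ⟨⟨0, hN⟩⟩) hA.eigenvalues < 1)
    (φ : Fin N → ℝ → ℝ) (hφ : ∀ i t, 0 < φ i t ∧ φ i t ≤ 1)
    (ρ : ℝ → Fin N → ℝ) (hdiff : ∀ i, Differentiable ℝ (fun t => ρ t i))
    (hrange : ∀ i t, 0 ≤ t → 0 ≤ ρ t i ∧ ρ t i ≤ 1)
    (hode : ∀ i t, 0 ≤ t →
      deriv (fun s => ρ s i) t =
        -ρ t i + lam * φ i t * (1 - ρ t i) * ∑ j, A i j * ρ t j) :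
    ∀ t : ℝ, 0 ≤ t →
      ∑ i, ρ t i ^ 2 ≤
        Real.exp (-2 * (1 - lam *
            Finset.univ.sup' (Finset.univ_nonempty_iff.mpr ⟨⟨0, hN⟩⟩) hA.eigenvalues) * t) *
          ∑ i, ρ 0 i ^ 2 :=
  diseaseFree_exponential_stability_general N hN A hA hApos lam hlam φ hφ ρ hdiff hrange hode
end

section
/- Let N ≥ 1, λ > 0, α > 0, and let β_ij ≥ 0, S_i* > 0, ρ_i* > 0 (i,j = 1,…,N) be real numbers satisfying the endemic equilibrium condition ρ_i* = α·Σ_{j=1}^N β_ij S_i* ρ_j* for every i. Define β̄_ij = β_ij S_i* ρ_j* and the N×N matrix B̄ by B̄_ii = Σ_{l ≠ i} β̄_il and B̄_ij = −β̄_ji for i ≠ j. If v ∈ ℝ^N satisfies B̄v = 0, then for every i: α·Σ_{j=1}^N β_ji S_j* v_j = v_i. -/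
open Matrix Finset

/-- Cofactor identity in the proof of Theorem 3: at the endemic equilibrium
`ρ_i* = α Σ_j β_ij S_i* ρ_j*`, with `β̄_ij = β_ij S_i* ρ_j*` and `B̄` the associated
Laplacian-type matrix, any `v` with `B̄v = 0` satisfies `α Σ_j β_ji S_j* v_j = v_i`. -/
theorem cofactor_identity
    (N : ℕ) (hN : 1 ≤ N) (lam alp : ℝ) (hlam : 0 < lam) (halp : 0 < alp)
    (β : Matrix (Fin N) (Fin N) ℝ) (hβ : ∀ i j, 0 ≤ β i j)
    (Sstar ρstar : Fin N → ℝ) (hS : ∀ i, 0 < Sstar i) (hρ : ∀ i, 0 < ρstar i)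
    (heq : ∀ i, ρstar i = alp * ∑ j, β i j * Sstar i * ρstar j)
    (βb : Matrix (Fin N) (Fin N) ℝ) (hβb : ∀ i j, βb i j = β i j * Sstar i * ρstar j)
    (B : Matrix (Fin N) (Fin N) ℝ)
    (hB : ∀ i j, B i j = if i = j then ∑ l ∈ Finset.univ.erase i, βb i l else -βb j i)
    (v : Fin N → ℝ) (hv : B.mulVec v = 0) :
    ∀ i, alp * ∑ j, β j i * Sstar j * v j = v i := by
  intro i
  have hrow : ∑ j, B i j * v j = 0 := by
    have := congrFun hv i
    simpa [Matrix.mulVec, dotProduct] using this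
  -- rewrite the row sum using hB
  have hsum : ∑ j, B i j * v j
      = ∑ j ∈ Finset.univ.erase i, (-(βb j i)) * v j
        + (∑ l ∈ Finset.univ.erase i, βb i l) * v i := by
    rw [← Finset.sum_erase_add _ _ (Finset.mem_univ i)]
    congr 1
    · refine Finset.sum_congr rfl fun j hj => ?_
      rw [hB]
      simp [(Finset.ne_of_mem_erase hj).symm]
    · rw [hB]; simp
  have key : (∑ l, βb i l) * v i = ∑ j, βb j i * v j := by
    have h1 : (∑ l ∈ Finset.univ.erase i, βb i l) * v i
        = ∑ j ∈ Finset.univ.erase i, βb j i * v j := by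
      have := hsum ▸ hrow
      have : ∑ j ∈ Finset.univ.erase i, (-(βb j i)) * v j
          + (∑ l ∈ Finset.univ.erase i, βb i l) * v i = 0 := this
      rw [Finset.sum_congr rfl (fun j _ => by ring :
        ∀ j ∈ Finset.univ.erase i, (-(βb j i)) * v j = -(βb j i * v j)),
        Finset.sum_neg_distrib] at this
      linarith
    calc (∑ l, βb i l) * v i
        = (∑ l ∈ Finset.univ.erase i, βb i l) * v i + βb i i * v i := by
          rw [← Finset.sum_erase_add _ _ (Finset.mem_univ i)]; ring
      _ = ∑ j ∈ Finset.univ.erase i, βb j i * v j + βb i i * v i := by rw [h1]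
      _ = ∑ j, βb j i * v j := by
          rw [← Finset.sum_erase_add _ _ (Finset.mem_univ i)]
  have hL : ∑ l, βb i l = ρstar i / alp := by
    have := heq i
    have hsum' : ∑ l, βb i l = ∑ j, β i j * Sstar i * ρstar j := by
      refine Finset.sum_congr rfl fun j _ => hβb i j
    rw [hsum']
    field_simp
    linarith [heq i]
  have hR : ∑ j, βb j i * v j = ρstar i * ∑ j, β j i * Sstar j * v j := by
    rw [Finset.mul_sum]
    refine Finset.sum_congr rfl fun j _ => ?_
    rw [hβb]; ring
  rw [hL, hR] at key
  have hρi := hρ i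
  have halp' := halp.ne'
  field_simp at key
  have : ρstar i * v i = ρstar i * (alp * ∑ j, β j i * Sstar j * v j) := by
    nlinarith [key]
  exact (mul_left_cancel₀ hρi.ne' this).symm
end

section
/- Let α ∈ (0,1], λ > 0, N ≥ 1, and let A be an N×N real matrix with nonnegative entries. If ρ ∈ ℝ^N has 0 ≤ ρ_i ≤ 1 for all i, is nonzero, and satisfies ρ_i = λα(Aρ)_i/(1 + λα(Aρ)_i) for every i, then λ·α·max_i Σ_j a_ij ≥ 1; that is, λ ≥ 1/(α·max_i Σ_j a_ij), where max_i Σ_j a_ij is the largest row sum of A. -/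
open Matrix Finset

/-- Row-sum form of the necessity condition in Theorem 1: a nonzero steady state of the
comparison SIS system forces `λ·α·max_i Σ_j a_ij ≥ 1`. -/
theorem endemic_implies_rowSum_threshold
    (N : ℕ) (hN : 1 ≤ N) (alp lam : ℝ) (halp0 : 0 < alp) (halp1 : alp ≤ 1)
    (hlam : 0 < lam) (A : Matrix (Fin N) (Fin N) ℝ) (hApos : ∀ i j, 0 ≤ A i j)
    (ρ : Fin N → ℝ) (hρrange : ∀ i, 0 ≤ ρ i ∧ ρ i ≤ 1) (hρne : ρ ≠ 0)
    (heq : ∀ i, ρ i = lam * alp * A.mulVec ρ i / (1 + lam * alp * A.mulVec ρ i)) :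
    1 ≤ lam * alp *
      Finset.univ.sup' (Finset.univ_nonempty_iff.mpr ⟨⟨0, hN⟩⟩) (fun i => ∑ j, A i j) := by
  have hne : (Finset.univ : Finset (Fin N)).Nonempty :=
    Finset.univ_nonempty_iff.mpr ⟨⟨0, hN⟩⟩
  -- maximizer of ρ
  obtain ⟨i, -, hi⟩ := Finset.exists_max_image Finset.univ ρ hne
  set m := ρ i with hm
  -- m > 0
  have hm0 : 0 < m := by
    obtain ⟨j, hj⟩ : ∃ j, ρ j ≠ 0 := Function.ne_iff.mp hρne
    have := (hρrange j).1
    have : 0 < ρ j := lt_of_le_of_ne this (Ne.symm hj)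
    exact lt_of_lt_of_le this (hi j (Finset.mem_univ j))
  have hAρ : 0 ≤ A.mulVec ρ i := by
    simp only [Matrix.mulVec, dotProduct]
    apply Finset.sum_nonneg
    intro j _
    exact mul_nonneg (hApos i j) (hρrange j).1
  have hx : 0 ≤ lam * alp * A.mulVec ρ i :=
    mul_nonneg (mul_nonneg hlam.le halp0.le) hAρ
  -- ρ i ≤ λ α (Aρ)_i
  have h1 : m ≤ lam * alp * A.mulVec ρ i := by
    rw [hm, heq i]
    have hden : (0:ℝ) < 1 + lam * alp * A.mulVec ρ i := by linarith
    rw [div_le_iff₀ hden]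
    nlinarith
  -- (Aρ)_i ≤ m * rowsum i
  have S := Finset.univ.sup' hne (fun i => ∑ j, A i j)
  have h2 : A.mulVec ρ i ≤ m * ∑ j, A i j := by
    simp only [Matrix.mulVec, dotProduct]
    rw [Finset.mul_sum]
    apply Finset.sum_le_sum
    intro j _
    have := hi j (Finset.mem_univ j)
    calc A i j * ρ j ≤ A i j * m := by
          exact mul_le_mul_of_nonneg_left this (hApos i j)
      _ = m * A i j := mul_comm _ _
  have h3 : (∑ j, A i j) ≤ Finset.univ.sup' hne (fun i => ∑ j, A i j) :=
    Finset.le_sup' (fun i => ∑ j, A i j) (Finset.mem_univ i)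
  have hsum0 : 0 ≤ ∑ j, A i j := Finset.sum_nonneg fun j _ => hApos i j
  have key : m ≤ lam * alp * (Finset.univ.sup' hne (fun i => ∑ j, A i j)) * m := by
    calc m ≤ lam * alp * A.mulVec ρ i := h1
      _ ≤ lam * alp * (m * ∑ j, A i j) :=
          mul_le_mul_of_nonneg_left h2 (mul_nonneg hlam.le halp0.le)
      _ ≤ lam * alp * (Finset.univ.sup' hne (fun i => ∑ j, A i j)) * m := by
          have hla : 0 < lam * alp := mul_pos hlam halp0
          nlinarith [mul_le_mul_of_nonneg_left h3 (mul_nonneg hla.le hm0.le)]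
  nlinarith [key, hm0]
end
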